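/- Let λ ∈ (0,1), γ ∈ (0,1). Define sequences (a^y_n), (a^z_n) of nonnegative reals by a^y₁ = a^z₁ = a₀ ≥ 0 and a^y_{n+1} = (1−λ)a^y_n + λ a^z_n, a^z_{n+1} = (1−λ)λγ·a^y_n + (1−λ+λ²γ)·a^z_n + (1−λ)λγ·p_n + λ²γ·q_n, where p_n, q_n ≥ 0. Then Σ_{n=1}^{N}(a^y_n, a^z_n) ≤ (I−H)⁻¹·((a₀, a₀) + F·Σ_{n=1}^{N}(p_n, q_n)) coordinatewise, where H and F are the 2×2 matrices with H₁₁=1−λ, H₁₂=λ, H₂₁=(1−λ)λγ, H₂₂=1−λ+λ²γ and F₁₁=F₁₂=0, F₂₁=(1−λ)λγ, F₂₂=λ²γ. -/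
import Mathlib


open Matrix

theorem stmt_11 (l γ a₀ : ℝ) (hl : l ∈ Set.Ioo (0:ℝ) 1) (hγ : γ ∈ Set.Ioo (0:ℝ) 1)
    (ha₀ : 0 ≤ a₀)
    (p q ay az : ℕ → ℝ) (hp : ∀ n, 0 ≤ p n) (hq : ∀ n, 0 ≤ q n)
    (hy1 : ay 1 = a₀) (hz1 : az 1 = a₀)
    (hyrec : ∀ n ≥ 1, ay (n + 1) = (1 - l) * ay n + l * az n)
    (hzrec : ∀ n ≥ 1, az (n + 1) =
      (1 - l) * l * γ * ay n + (1 - l + l ^ 2 * γ) * az n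
        + (1 - l) * l * γ * p n + l ^ 2 * γ * q n)
    (H F : Matrix (Fin 2) (Fin 2) ℝ)
    (hH : H = !![1 - l, l; (1 - l) * l * γ, 1 - l + l ^ 2 * γ])
    (hF : F = !![0, 0; (1 - l) * l * γ, l ^ 2 * γ]) :
    ∀ N ≥ 1, ∀ i,
      (∑ n ∈ Finset.Icc 1 N, (![ay n, az n] : Fin 2 → ℝ)) i ≤
        ((1 - H)⁻¹ *ᵥ (![a₀, a₀] +
          F *ᵥ ![∑ n ∈ Finset.Icc 1 N, p n, ∑ n ∈ Finset.Icc 1 N, q n])) i := by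
  obtain ⟨hl0, hl1⟩ := hl
  obtain ⟨hγ0, hγ1⟩ := hγ
  -- nonnegativity of the sequences
  have hnn : ∀ n ≥ 1, 0 ≤ ay n ∧ 0 ≤ az n := by
    intro n hn
    induction n, hn using Nat.le_induction with
    | base => exact ⟨hy1 ▸ ha₀, hz1 ▸ ha₀⟩
    | succ n hn ih =>
      obtain ⟨h1, h2⟩ := ih
      have h3 : (0:ℝ) ≤ 1 - l := by linarith
      refine ⟨?_, ?_⟩
      · rw [hyrec n hn]
        nlinarith
      · rw [hzrec n hn]
        have l1 := mul_nonneg (mul_nonneg (mul_nonneg h3 hl0.le) hγ0.le) h1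
        have l2 := mul_nonneg (mul_nonneg (mul_nonneg h3 hl0.le) hγ0.le) (hp n)
        have l3 := mul_nonneg (mul_nonneg (mul_nonneg hl0.le hl0.le) hγ0.le) (hq n)
        have l4 : (0:ℝ) ≤ (1 - l + l^2*γ) * az n := by
          apply mul_nonneg _ h2; nlinarith
        nlinarith [l1, l2, l3, l4]
  -- key identities for the partial sums
  have key : ∀ N ≥ 1,
      l * (∑ n ∈ Finset.Icc 1 N, ay n) - l * (∑ n ∈ Finset.Icc 1 N, az n)
        = a₀ - ay (N+1) ∧
      (l - l^2*γ) * (∑ n ∈ Finset.Icc 1 N, az n)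
        - (1-l)*l*γ * (∑ n ∈ Finset.Icc 1 N, ay n)
        = a₀ - az (N+1) + (1-l)*l*γ * (∑ n ∈ Finset.Icc 1 N, p n)
          + l^2*γ * (∑ n ∈ Finset.Icc 1 N, q n) := by
    intro N hN
    induction N, hN using Nat.le_induction with
    | base =>
      simp only [Finset.Icc_self, Finset.sum_singleton]
      rw [hyrec 1 le_rfl, hzrec 1 le_rfl, hy1, hz1]
      constructor <;> ring
    | succ N hN ih =>
      obtain ⟨i1, i2⟩ := ih
      have h1 : (1:ℕ) ≤ N + 1 := by omega
      rw [Finset.sum_Icc_succ_top h1, Finset.sum_Icc_succ_top h1,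
        Finset.sum_Icc_succ_top h1, Finset.sum_Icc_succ_top h1,
        hyrec (N+1) h1, hzrec (N+1) h1]
      constructor <;> nlinarith [i1, i2]
  have hl' : l ≠ 0 := ne_of_gt hl0
  have h1γ : (1:ℝ) - γ ≠ 0 := by linarith
  have hdet : (0:ℝ) < l^2 * (1 - γ) := by
    have : (0:ℝ) < 1 - γ := by linarith
    positivity
  -- compute (1 - H)⁻¹ explicitly
  have hinv : (1 - H)⁻¹ = (l^2*(1-γ))⁻¹ • !![l - l^2*γ, l; (1-l)*l*γ, l] := by
    apply Matrix.inv_eq_right_inv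
    rw [hH]
    ext a b
    fin_cases a <;> fin_cases b <;>
      simp [Matrix.mul_apply, Fin.sum_univ_two, Matrix.sub_apply, Matrix.one_apply,
        Matrix.smul_apply, smul_eq_mul] <;>
      field_simp <;> ring
  intro N hN i
  obtain ⟨k1, k2⟩ := key N hN
  obtain ⟨hyN, hzN⟩ := hnn (N+1) (by omega)
  have hsumdist : (∑ n ∈ Finset.Icc 1 N, (![ay n, az n] : Fin 2 → ℝ)) i
      = (![∑ n ∈ Finset.Icc 1 N, ay n, ∑ n ∈ Finset.Icc 1 N, az n] : Fin 2 → ℝ) i := by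
    fin_cases i <;> simp [Finset.sum_apply]
  rw [hinv, hF, hsumdist]
  set Sy := ∑ n ∈ Finset.Icc 1 N, ay n with hSy
  set Sz := ∑ n ∈ Finset.Icc 1 N, az n with hSz
  set P := ∑ n ∈ Finset.Icc 1 N, p n with hP'
  set Q := ∑ n ∈ Finset.Icc 1 N, q n with hQ'
  have hP : 0 ≤ P := Finset.sum_nonneg fun n _ => hp n
  have hQ : 0 ≤ Q := Finset.sum_nonneg fun n _ => hq n
  have hlγ : (0:ℝ) < l - l^2*γ := by nlinarith
  clear_value Sy Sz P Q
  clear hsumdist hinv hy1 hz1 hyrec hzrec hnn key hp hq hSy hSz hP' hQ' hH hF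
  fin_cases i <;>
    simp only [Fin.mk_zero, Fin.mk_one, Fin.isValue, Matrix.smul_mulVec,
      Pi.smul_apply, smul_eq_mul, Matrix.mulVec, dotProduct, Fin.sum_univ_two,
      Matrix.cons_val', Matrix.cons_val_zero, Matrix.cons_val_one, Matrix.head_cons,
      Matrix.head_fin_const, Matrix.empty_val', Matrix.cons_val_fin_one,
      Pi.add_apply, Matrix.smul_apply, Matrix.of_apply]
  · have e1 : (l - l^2*γ) * (l * Sy - l * Sz) = (l - l^2*γ) * (a₀ - ay (N+1)) := by
      rw [k1]
    have e2 : l * ((l - l^2*γ) * Sz - (1-l)*l*γ * Sy)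
        = l * (a₀ - az (N+1) + (1-l)*l*γ * P + l^2*γ * Q) := by rw [k2]
    have h0 : (l^2*(1-γ)) * Sy ≤ (l - l^2*γ) * (a₀ + (0 * P + 0 * Q))
        + l * (a₀ + ((1-l)*l*γ * P + l^2*γ * Q)) := by
      linarith [e1, e2, mul_nonneg hlγ.le hyN, mul_nonneg hl0.le hzN]
    have h2 := mul_le_mul_of_nonneg_left h0 (inv_nonneg.mpr hdet.le)
    rw [inv_mul_cancel_left₀ (ne_of_gt hdet)] at h2
    linarith [h2]
  · have e1 : ((1-l)*l*γ) * (l * Sy - l * Sz) = ((1-l)*l*γ) * (a₀ - ay (N+1)) := by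
      rw [k1]
    have e2 : l * ((l - l^2*γ) * Sz - (1-l)*l*γ * Sy)
        = l * (a₀ - az (N+1) + (1-l)*l*γ * P + l^2*γ * Q) := by rw [k2]
    have hc : (0:ℝ) ≤ (1-l)*l*γ := mul_nonneg (mul_nonneg (by linarith) hl0.le) hγ0.le
    have h0 : (l^2*(1-γ)) * Sz ≤ ((1-l)*l*γ) * (a₀ + (0 * P + 0 * Q))
        + l * (a₀ + ((1-l)*l*γ * P + l^2*γ * Q)) := by
      linarith [e1, e2, mul_nonneg hc hyN, mul_nonneg hl0.le hzN]
    have h2 := mul_le_mul_of_nonneg_left h0 (inv_nonneg.mpr hdet.le)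
    rw [inv_mul_cancel_left₀ (ne_of_gt hdet)] at h2
    linarith [h2]
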